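/- arXiv:math/0406414 — 3 statements merged into one kernel-verified Lean document; each statement's English description precedes it below -/
import Mathlib

section
/- Let φ be an exponential map on an integral domain A over a field k. Then A^φ is algebraically closed in A: every element of A that is a root of a nonzero polynomial with coefficients in A^φ lies in A^φ. -/
open Polynomial

/-- An exponential map on a `k`-algebra `A`: a `k`-algebra homomorphism `φ : A → A[U]`
such that evaluating at `U = 0` is the identity and `φ_S φ_U = φ_{S+U}`. -/
def IsExpMap {k A : Type*} [CommSemiring k] [CommSemiring A] [Algebra k A]
    (φ : A →ₐ[k] A[X]) : Prop :=
  (∀ a : A, (φ a).eval 0 = a) ∧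
  (∀ a : A,
    eval₂ ((mapRingHom (C : A →+* A[X])).comp (φ : A →+* A[X])) (C X) (φ a)
      = eval₂ ((C : A[X] →+* A[X][X]).comp (C : A →+* A[X])) (X + C X) (φ a))

/-- The ring of `φ`-invariants `A^φ = {a : A | φ a = a}`. -/
noncomputable def expInv {k A : Type*} [CommSemiring k] [CommSemiring A] [Algebra k A]
    (φ : A →ₐ[k] A[X]) : Subalgebra k A :=
  AlgHom.equalizer φ (IsScalarTower.toAlgHom k A A[X])

/-- The AK invariant: the intersection of the rings of invariants of all exponential maps. -/
noncomputable def AK (k A : Type*) [CommSemiring k] [CommSemiring A] [Algebra k A] : Subalgebra k A :=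
  ⨅ φ ∈ {ψ : A →ₐ[k] A[X] | IsExpMap ψ}, expInv φ

/-!
Applying `φ` to `P(a) = 0` gives `P(φ a) = 0` in `A[U]`, because the coefficients of `P` are
invariant. Over a domain a nonzero polynomial composed with a nonconstant one is nonzero, so
`φ a` is a constant, and evaluating at `U = 0` shows that this constant is `a`.
-/

namespace Polynomial

variable {A B : Type*} [CommSemiring A] [CommSemiring B]

theorem eval₂_congr_of_coeff {f g : A →+* B} {x : B} {P : A[X]}
    (h : ∀ i, f (P.coeff i) = g (P.coeff i)) : P.eval₂ f x = P.eval₂ g x := by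
  simp only [eval₂_eq_sum_range, h]

theorem map_eval_eq_comp (φ : A →+* A[X]) {P : A[X]}
    (hP : ∀ i, φ (P.coeff i) = C (P.coeff i)) (a : A) : φ (P.eval a) = P.comp (φ a) := by
  rw [← eval₂_hom, comp]
  exact eval₂_congr_of_coeff hP

theorem eq_C_of_comp_eq_zero [NoZeroDivisors A] {P q : A[X]} (hP : P ≠ 0) (h : P.comp q = 0) :
    q = C (q.coeff 0) :=
  ((comp_eq_zero_iff.mp h).resolve_left hP).2

end Polynomial

theorem mem_expInv_iff {k A : Type*} [CommSemiring k] [CommSemiring A] [Algebra k A]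
    (φ : A →ₐ[k] A[X]) (a : A) : a ∈ expInv φ ↔ φ a = C a := by
  rw [expInv, AlgHom.mem_equalizer, IsScalarTower.coe_toAlgHom', algebraMap_eq]

/-- The ring of invariants of an exponential map on a domain is
algebraically closed in the domain. -/
theorem statement3 {k A : Type*} [Field k] [CommRing A] [IsDomain A] [Algebra k A]
    (φ : A →ₐ[k] A[X]) (hφ : IsExpMap φ)
    (a : A) (P : Polynomial A) (hP : ∀ i : ℕ, P.coeff i ∈ expInv φ)
    (hP0 : P ≠ 0) (hroot : P.eval a = 0) :
    a ∈ expInv φ := by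
  have hcoeff : ∀ i, φ (P.coeff i) = C (P.coeff i) := fun i => (mem_expInv_iff φ _).mp (hP i)
  have hcomp : P.comp (φ a) = 0 :=
    (map_eval_eq_comp (φ : A →+* A[X]) hcoeff a).symm.trans (by rw [hroot, map_zero])
  rw [mem_expInv_iff]
  calc φ a = C ((φ a).coeff 0) := eq_C_of_comp_eq_zero hP0 hcomp
    _ = C a := by rw [coeff_zero_eq_eval_zero, hφ.1 a]
end

section
/- Let φ be a nontrivial exponential map on an integral domain A over a field k, and let x ∈ A be an element of minimal positive φ-degree n (i.e., deg_φ(x) = n > 0 and every element of A with positive φ-degree has φ-degree at least n). Then for every nonzero a ∈ A, n divides deg_φ(a). -/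
open Polynomial

/-!
Comparing coefficients in `φ_S φ_U = φ_{S+U}` shows that if `φ a = ∑ aᵢ Uⁱ`, then
`φ aᵢ = ∑ⱼ C(i+j, j) a_{i+j} Uʲ`; so when `d = deg_φ a` and `C(d, i) ≠ 0` in `A`, the coefficient
`aᵢ` has `φ`-degree `d - i`. In characteristic `0` this puts `1 = n - (n - 1)` among the
`φ`-degrees, so `n = 1`. In characteristic `p`, minimality of `n` forces `p ∣ C(n, i)` for
`0 < i < n`, hence `n = pᵉ`; for any `φ`-degree `d`, Lucas' theorem gives
`C(d, d mod pᵉ) ≡ 1 [MOD p]`, so `d mod pᵉ` is a `φ`-degree smaller than `n`, hence `0`.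
-/

namespace Polynomial

variable {A : Type*} [CommSemiring A]

theorem coeff_coeff_eval₂_mapRingHom_comp_C_X (f : A →+* A[X]) (q : A[X]) (i j : ℕ) :
    ((eval₂ ((mapRingHom (C : A →+* A[X])).comp f) (C X) q).coeff j).coeff i
      = (f (q.coeff i)).coeff j := by
  induction q using Polynomial.induction_on' with
  | add q r hq hr => simp only [eval₂_add, coeff_add, map_add, hq, hr]
  | monomial e c =>
    rw [eval₂_monomial, RingHom.comp_apply, coe_mapRingHom, ← map_pow, coeff_mul_C, coeff_map,
      coeff_C_mul, coeff_X_pow, coeff_monomial]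
    rcases eq_or_ne e i with rfl | hei
    · simp
    · simp [hei, Ne.symm hei]

theorem coeff_coeff_eval₂_C_comp_C_X_add_C_X (q : A[X]) (i j : ℕ) :
    ((eval₂ ((C : A[X] →+* A[X][X]).comp (C : A →+* A[X])) (X + C X) q).coeff j).coeff i
      = ((i + j).choose j : A) * q.coeff (i + j) := by
  induction q using Polynomial.induction_on' with
  | add q r hq hr => simp only [eval₂_add, coeff_add, hq, hr, mul_add]
  | monomial e c =>
    rw [eval₂_monomial, RingHom.comp_apply, coeff_C_mul, coeff_X_add_C_pow,
      ← C_eq_natCast, coeff_C_mul, coeff_mul_C, coeff_X_pow, coeff_monomial]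
    rcases eq_or_ne e (i + j) with rfl | hne
    · simp [mul_comm]
    · rw [if_neg hne, mul_zero]
      by_cases hj : j ≤ e
      · simp [show i ≠ e - j by omega]
      · rw [Nat.choose_eq_zero_of_lt (by omega), Nat.cast_zero, mul_zero, mul_zero]

end Polynomial

namespace IsExpMap

variable {k A : Type*} [CommSemiring k] [CommSemiring A] [Algebra k A] {φ : A →ₐ[k] A[X]}

theorem coeff_map_coeff (hφ : IsExpMap φ) (a : A) (i j : ℕ) :
    (φ ((φ a).coeff i)).coeff j = ((i + j).choose j : A) * (φ a).coeff (i + j) := by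
  simpa only [coeff_coeff_eval₂_mapRingHom_comp_C_X, coeff_coeff_eval₂_C_comp_C_X_add_C_X,
    RingHom.coe_coe] using
    congr_arg (fun q : A[X][X] => (q.coeff j).coeff i) (hφ.2 a)

theorem natDegree_map_coeff [NoZeroDivisors A] (hφ : IsExpMap φ) (a : A) {i : ℕ}
    (hi : i ≤ (φ a).natDegree) (hc : ((φ a).natDegree.choose i : A) ≠ 0) :
    (φ ((φ a).coeff i)).natDegree = (φ a).natDegree - i := by
  by_cases h0 : φ a = 0
  · simp [h0]
  set d := (φ a).natDegree
  refine natDegree_eq_of_le_of_coeff_ne_zero ?_ ?_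
  · refine natDegree_le_iff_coeff_eq_zero.mpr fun N hN => ?_
    rw [hφ.coeff_map_coeff, coeff_eq_zero_of_natDegree_lt (by omega), mul_zero]
  · rw [hφ.coeff_map_coeff, Nat.add_sub_cancel' hi, Nat.choose_symm hi]
    exact mul_ne_zero hc (leadingCoeff_ne_zero.mpr h0)

end IsExpMap

theorem Nat.choose_add_modEq_one_of_pow_dvd {p e s t : ℕ} [Fact p.Prime]
    (hs : p ^ e ∣ s) (ht : t < p ^ e) :
    (s + t).choose t ≡ 1 [MOD p] := by
  induction e generalizing s t with
  | zero =>
    obtain rfl : t = 0 := by simpa using ht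
    simp [Nat.ModEq.refl]
  | succ e ih =>
    obtain ⟨u, rfl⟩ := hs
    have hp : 0 < p := Nat.pos_of_neZero p
    have hmod : (p ^ (e + 1) * u + t) % p = t % p := by
      rw [pow_succ', mul_assoc, Nat.mul_add_mod]
    have hdiv : (p ^ (e + 1) * u + t) / p = p ^ e * u + t / p := by
      rw [pow_succ', mul_assoc, Nat.mul_add_div hp]
    have ht' : t / p < p ^ e := by
      rwa [Nat.div_lt_iff_lt_mul hp, ← pow_succ]
    calc (p ^ (e + 1) * u + t).choose t
        ≡ (t % p).choose (t % p) * (p ^ e * u + t / p).choose (t / p) [MOD p] := by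
          simpa only [hmod, hdiv] using Choose.choose_modEq_choose_mod_mul_choose_div_nat
            (n := p ^ (e + 1) * u + t) (k := t) (p := p)
      _ = (p ^ e * u + t / p).choose (t / p) := by rw [Nat.choose_self, one_mul]
      _ ≡ 1 [MOD p] := ih (dvd_mul_right _ _) ht'

section DegreeSets

variable {S : Set ℕ} {n : ℕ}

theorem exists_eq_pow_of_forall_pos_le {p : ℕ} [Fact p.Prime]
    (hS : ∀ d ∈ S, ∀ i ≤ d, ¬ p ∣ d.choose i → d - i ∈ S)
    (hn : n ∈ S) (hn0 : 0 < n) (hmin : ∀ d ∈ S, 0 < d → n ≤ d) : ∃ e, n = p ^ e := by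
  refine ⟨_, Choose.eq_pow_multiplicity_of_choose_modEq_zero_nat hn0 fun i hi => ?_⟩
  rw [Finset.mem_Icc] at hi
  rw [Nat.modEq_zero_iff_dvd]
  by_contra hndvd
  have := hmin (n - i) (hS n hn i (by omega) hndvd) (by omega)
  omega

theorem pow_dvd_of_forall_pos_le {p e : ℕ} [Fact p.Prime]
    (hS : ∀ d ∈ S, ∀ i ≤ d, ¬ p ∣ d.choose i → d - i ∈ S)
    (hmin : ∀ d ∈ S, 0 < d → p ^ e ≤ d) {d : ℕ} (hd : d ∈ S) : p ^ e ∣ d := by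
  set t := d % p ^ e
  have ht : t < p ^ e := Nat.mod_lt _ (Nat.pos_of_neZero _)
  have htd : t ≤ d := Nat.mod_le _ _
  have hchoose : ¬ p ∣ d.choose (d - t) := by
    have h := Nat.choose_add_modEq_one_of_pow_dvd (p := p) (Nat.dvd_sub_mod d) ht
    rw [Nat.sub_add_cancel htd] at h
    rw [Nat.choose_symm htd]
    intro hdvd
    have h01 : 0 ≡ 1 [MOD p] := (Nat.modEq_zero_iff_dvd.mpr hdvd).symm.trans h
    exact (Fact.out : p.Prime).not_dvd_one ((Nat.modEq_iff_dvd' (Nat.zero_le 1)).mp h01)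
  have htS : t ∈ S := by
    simpa [Nat.sub_sub_self htd] using hS d hd (d - t) (Nat.sub_le _ _) hchoose
  exact Nat.dvd_of_mod_eq_zero (Nat.eq_zero_of_not_pos fun h => (hmin t htS h).not_gt ht)

theorem dvd_of_forall_pos_le_of_choose_ne_zero (R : Type*) [NonAssocSemiring R]
    [NoZeroDivisors R] [Nontrivial R]
    (hS : ∀ d ∈ S, ∀ i ≤ d, (d.choose i : R) ≠ 0 → d - i ∈ S)
    (hn : n ∈ S) (hn0 : 0 < n) (hmin : ∀ d ∈ S, 0 < d → n ≤ d) {d : ℕ} (hd : d ∈ S) :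
    n ∣ d := by
  have hS' : ∀ d ∈ S, ∀ i ≤ d, ¬ ringChar R ∣ d.choose i → d - i ∈ S :=
    fun d hd i hi h => hS d hd i hi (by rwa [Ne, ringChar.spec])
  obtain hp | h0 := CharP.char_is_prime_or_zero R (ringChar R)
  · have : Fact (ringChar R).Prime := ⟨hp⟩
    obtain ⟨e, rfl⟩ := exists_eq_pow_of_forall_pos_le hS' hn hn0 hmin
    exact pow_dvd_of_forall_pos_le hS' hmin hd
  · have h1 : 1 ∈ S := by
      have := hS' n hn (n - 1) (Nat.sub_le _ _)
        (by rw [h0, zero_dvd_iff]; exact (Nat.choose_pos (Nat.sub_le _ _)).ne')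
      rwa [Nat.sub_sub_self hn0] at this
    rw [show n = 1 by have := hmin 1 h1 one_pos; omega]
    exact one_dvd d

end DegreeSets

theorem statement7_general {k A : Type*} [Field k] [CommRing A] [IsDomain A] [Algebra k A]
    (φ : A →ₐ[k] A[X]) (hφ : IsExpMap φ)
    (x : A) (n : ℕ) (hn : 0 < n) (hxn : (φ x).natDegree = n)
    (hmin : ∀ a : A, 0 < (φ a).natDegree → n ≤ (φ a).natDegree) :
    ∀ a : A, a ≠ 0 → n ∣ (φ a).natDegree := by
  set S := Set.range fun a : A => (φ a).natDegree
  have hS : ∀ d ∈ S, ∀ i ≤ d, (d.choose i : A) ≠ 0 → d - i ∈ S := by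
    rintro _ ⟨a, rfl⟩ i hi hc
    exact ⟨_, hφ.natDegree_map_coeff a hi hc⟩
  have hminS : ∀ d ∈ S, 0 < d → n ≤ d := by
    rintro _ ⟨a, rfl⟩
    exact hmin a
  intro a _
  exact dvd_of_forall_pos_le_of_choose_ne_zero A hS ⟨x, hxn⟩ hn hminS ⟨a, rfl⟩

/-- Let `φ` be a nontrivial exponential map on a domain `A` over `k`, and let
`x` have minimal positive `φ`-degree `n`. Then `n` divides `deg_φ(a)` for every nonzero
`a : A`. -/
theorem statement7 {k A : Type*} [Field k] [CommRing A] [IsDomain A] [Algebra k A]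
    (φ : A →ₐ[k] A[X]) (hφ : IsExpMap φ)
    (hnt : φ ≠ IsScalarTower.toAlgHom k A A[X])
    (x : A) (n : ℕ) (hn : 0 < n) (hxn : (φ x).natDegree = n)
    (hmin : ∀ a : A, 0 < (φ a).natDegree → n ≤ (φ a).natDegree) :
    ∀ a : A, a ≠ 0 → n ∣ (φ a).natDegree :=
  statement7_general φ hφ x n hn hxn hmin
end

section
/- Let A be an integral domain of prime characteristic p over a field k, φ an exponential map on A, and n, m natural numbers with n ≥ 2 and m ≥ 2 such that neither n nor m is a power of p. If c₁, c₂ ∈ A^φ \ {0} and a, b ∈ A are such that c₁ aⁿ + c₂ bᵐ ∈ A^φ \ {0}, then a, b ∈ A^φ. -/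
open Polynomial

section Aux

open UniqueFactorizationMonoid
open scoped Classical

lemma myPrimeFactorsMul {M : Type*} [CommMonoidWithZero M] [IsCancelMulZero M] [NormalizationMonoid M]
    [UniqueFactorizationMonoid M] {x y : M} (hx : x ≠ 0) (hy : y ≠ 0) :
    primeFactors (x * y) = primeFactors x ∪ primeFactors y := by
  unfold UniqueFactorizationMonoid.primeFactors
  rw [normalizedFactors_mul hx hy, Multiset.toFinset_add]

lemma myRadicalPowMul {K : Type*} [Field K] {P Q : K[X]} (hP : P ≠ 0) (hQ : Q ≠ 0)
    {n m : ℕ} (hn : 0 < n) (hm : 0 < m) :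
    radical (P ^ n * Q ^ m) = radical (P * Q) := by
  unfold UniqueFactorizationMonoid.radical
  rw [myPrimeFactorsMul (pow_ne_zero n hP) (pow_ne_zero m hQ), myPrimeFactorsMul hP hQ,
    primeFactors_pow P hn.ne', primeFactors_pow Q hm.ne']

lemma myCore {K : Type*} [Field K] (p : ℕ) (hp : p.Prime) [CharP K p]
    {n m : ℕ} (hn : 2 ≤ n) (hm : 2 ≤ m) (hpn : ¬ p ∣ n) (hpm : ¬ p ∣ m)
    {u v w : K} (hu : u ≠ 0) (hv : v ≠ 0) (hw : w ≠ 0) :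
    ∀ N (P Q : K[X]), P.natDegree + Q.natDegree ≤ N →
      C u * P ^ n + C v * Q ^ m = C w → P.natDegree = 0 ∧ Q.natDegree = 0 := by
  intro N
  induction N with
  | zero => intro P Q h _; omega
  | succ N ih =>
    intro P Q hdeg heq
    by_cases hdone : P.natDegree = 0 ∧ Q.natDegree = 0
    · exact hdone
    by_cases hP0 : P = 0
    · subst hP0
      rw [zero_pow (by omega), mul_zero, zero_add] at heq
      have h1 : (C v * Q ^ m).natDegree = (C w).natDegree := by rw [heq]
      rw [natDegree_C_mul hv, natDegree_pow, natDegree_C] at h1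
      refine ⟨by simp, ?_⟩
      rcases Nat.mul_eq_zero.mp h1 with h | h
      · omega
      · exact h
    by_cases hQ0 : Q = 0
    · subst hQ0
      rw [zero_pow (by omega), mul_zero, add_zero] at heq
      have h1 : (C u * P ^ n).natDegree = (C w).natDegree := by rw [heq]
      rw [natDegree_C_mul hu, natDegree_pow, natDegree_C] at h1
      refine ⟨?_, by simp⟩
      rcases Nat.mul_eq_zero.mp h1 with h | h
      · omega
      · exact h
    by_cases hd : derivative P = 0 ∧ derivative Q = 0
    · -- contract step
      have hPc := expand_contract p hd.1 hp.ne_zero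
      have hQc := expand_contract p hd.2 hp.ne_zero
      set P₁ := contract p P with hP₁
      set Q₁ := contract p Q with hQ₁
      have hexp : (expand K p) (C u * P₁ ^ n + C v * Q₁ ^ m) = (expand K p) (C w) := by
        rw [map_add, map_mul, map_mul, map_pow, map_pow, expand_C, expand_C, expand_C,
          hPc, hQc, heq]
      have heq1 := expand_injective hp.pos hexp
      have e1 : P₁.natDegree * p = P.natDegree := by rw [← natDegree_expand, hPc]
      have e2 : Q₁.natDegree * p = Q.natDegree := by rw [← natDegree_expand, hQc]
      have h2P : P₁.natDegree * 2 ≤ P.natDegree := by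
        rw [← e1]; exact Nat.mul_le_mul_left _ hp.two_le
      have h2Q : Q₁.natDegree * 2 ≤ Q.natDegree := by
        rw [← e2]; exact Nat.mul_le_mul_left _ hp.two_le
      have hle : P₁.natDegree + Q₁.natDegree ≤ N := by omega
      obtain ⟨z1, z2⟩ := ih P₁ Q₁ hle heq1
      constructor
      · rw [← e1, z1, zero_mul]
      · rw [← e2, z2, zero_mul]
    · -- Mason-Stothers
      exfalso
      set a := C u * P ^ n with ha_def
      set b := C v * Q ^ m with hb_def
      set c : K[X] := -C w with hc_def
      have ha : a ≠ 0 := mul_ne_zero (by simpa using hu) (pow_ne_zero _ hP0)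
      have hb : b ≠ 0 := mul_ne_zero (by simpa using hv) (pow_ne_zero _ hQ0)
      have hc : c ≠ 0 := by simpa [hc_def] using hw
      have hsum : a + b + c = 0 := by rw [ha_def, hb_def, hc_def, heq, add_neg_cancel]
      have hab : IsCoprime a b :=
        ⟨C w⁻¹, C w⁻¹, by
          rw [mul_comm (C w⁻¹) a, mul_comm (C w⁻¹) b, ← add_mul, ha_def, hb_def, heq,
            ← C_mul, mul_inv_cancel₀ hw, C_1]⟩
      have hcc : ∀ x : K[X], IsCoprime c x := fun x =>
        ⟨-C w⁻¹, 0, by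
          rw [zero_mul, add_zero, hc_def, neg_mul_neg, ← C_mul, inv_mul_cancel₀ hw, C_1]⟩
      have hnK : (n : K) ≠ 0 := by
        rw [Ne, CharP.cast_eq_zero_iff K p]; exact hpn
      have hmK : (m : K) ≠ 0 := by
        rw [Ne, CharP.cast_eq_zero_iff K p]; exact hpm
      rcases Polynomial.abc ha hb hc hab hsum with
        ⟨h1, h2, -⟩ | ⟨hda, hdb, -⟩
      · -- degree bounds
        have hUnit : IsUnit (C (u * v * -w)) :=
          isUnit_C.mpr (isUnit_iff_ne_zero.mpr (by
            simp [hu, hv, hw]))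
        have hprod : a * b * c = P ^ n * Q ^ m * ↑hUnit.unit := by
          rw [IsUnit.unit_spec, ha_def, hb_def, hc_def, C_mul, C_mul, C_neg]; ring
        have hrad : radical (a * b * c) = radical (P * Q) := by
          rw [hprod, radical_mul_of_isUnit_right (Units.isUnit _), myRadicalPowMul hP0 hQ0 (by omega) (by omega)]
        have hradle : (radical (a * b * c)).natDegree ≤ P.natDegree + Q.natDegree := by
          rw [hrad, ← natDegree_mul hP0 hQ0]
          exact natDegree_le_of_dvd radical_dvd_self (mul_ne_zero hP0 hQ0)
        have hdega : a.natDegree = n * P.natDegree := by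
          rw [ha_def, natDegree_C_mul hu, natDegree_pow]
        have hdegb : b.natDegree = m * Q.natDegree := by
          rw [hb_def, natDegree_C_mul hv, natDegree_pow]
        rw [hdega] at h1
        rw [hdegb] at h2
        have e1 : 2 * P.natDegree ≤ n * P.natDegree := Nat.mul_le_mul_right _ hn
        have e2 : 2 * Q.natDegree ≤ m * Q.natDegree := Nat.mul_le_mul_right _ hm
        omega
      · -- derivatives vanish: contradiction
        apply hd
        rw [ha_def, derivative_C_mul, derivative_pow] at hda
        rw [hb_def, derivative_C_mul, derivative_pow] at hdb
        constructor
        · have := mul_eq_zero.mp hda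
          rcases this with h | h
          · exact absurd h (by simpa using hu)
          rcases mul_eq_zero.mp h with h' | h'
          · rcases mul_eq_zero.mp h' with h'' | h''
            · exact absurd (C_eq_zero.mp h'') hnK
            · exact absurd h'' (pow_ne_zero _ hP0)
          · exact h'
        · have := mul_eq_zero.mp hdb
          rcases this with h | h
          · exact absurd h (by simpa using hv)
          rcases mul_eq_zero.mp h with h' | h'
          · rcases mul_eq_zero.mp h' with h'' | h''
            · exact absurd (C_eq_zero.mp h'') hmK
            · exact absurd h'' (pow_ne_zero _ hQ0)
          · exact h'

lemma myMain {K : Type*} [Field K] (p : ℕ) (hp : p.Prime) [CharP K p]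
    {n m : ℕ} (hn : 2 ≤ n) (hm : 2 ≤ m)
    (hnp : ¬ ∃ j : ℕ, n = p ^ j) (hmp : ¬ ∃ j : ℕ, m = p ^ j)
    {u v w : K} (hu : u ≠ 0) (hv : v ≠ 0) (hw : w ≠ 0) {P Q : K[X]}
    (heq : C u * P ^ n + C v * Q ^ m = C w) :
    P.natDegree = 0 ∧ Q.natDegree = 0 := by
  have hn0 : n ≠ 0 := by omega
  have hm0 : m ≠ 0 := by omega
  set e := n.factorization p with he
  set f := m.factorization p with hf
  set n' := n / p ^ e with hn'def
  set m' := m / p ^ f with hm'def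
  have hordn : p ^ e * n' = n := Nat.ordProj_mul_ordCompl_eq_self n p
  have hordm : p ^ f * m' = m := Nat.ordProj_mul_ordCompl_eq_self m p
  have hpn' : ¬ p ∣ n' := Nat.not_dvd_ordCompl hp hn0
  have hpm' : ¬ p ∣ m' := Nat.not_dvd_ordCompl hp hm0
  have hn'pos : 0 < n' := Nat.ordCompl_pos p hn0
  have hm'pos : 0 < m' := Nat.ordCompl_pos p hm0
  have hn'1 : n' ≠ 1 := fun h1 => hnp ⟨e, by rw [← hordn, h1, mul_one]⟩
  have hm'1 : m' ≠ 1 := fun h1 => hmp ⟨f, by rw [← hordm, h1, mul_one]⟩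
  have hn'2 : 2 ≤ n' := by omega
  have hm'2 : 2 ≤ m' := by omega
  have heq' : C u * (P ^ (p ^ e)) ^ n' + C v * (Q ^ (p ^ f)) ^ m' = C w := by
    rw [← pow_mul, ← pow_mul, hordn, hordm]; exact heq
  obtain ⟨z1, z2⟩ := myCore p hp hn'2 hm'2 hpn' hpm' hu hv hw
    ((P ^ (p ^ e)).natDegree + (Q ^ (p ^ f)).natDegree) _ _ le_rfl heq'
  rw [natDegree_pow] at z1 z2
  have hpe : p ^ e ≠ 0 := pow_ne_zero _ hp.ne_zero
  have hpf : p ^ f ≠ 0 := pow_ne_zero _ hp.ne_zero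
  constructor
  · rcases Nat.mul_eq_zero.mp z1 with h | h
    · exact absurd h hpe
    · exact h
  · rcases Nat.mul_eq_zero.mp z2 with h | h
    · exact absurd h hpf
    · exact h

lemma mem_expInv {k A : Type*} [CommSemiring k] [CommSemiring A] [Algebra k A]
    (φ : A →ₐ[k] A[X]) (x : A) : x ∈ expInv φ ↔ φ x = C x := by
  rw [expInv, AlgHom.mem_equalizer]
  constructor <;> intro h <;> simpa [Polynomial.algebraMap_eq] using h

end Aux

/-- Let `A` be a domain of prime characteristic `p` over a field `k`, `φ`
an exponential map on `A`, and `n, m ≥ 2` natural numbers, neither of which is a power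
of `p`. If `c₁, c₂ ∈ A^φ \ {0}` and `c₁ aⁿ + c₂ bᵐ ∈ A^φ \ {0}`, then `a, b ∈ A^φ`. -/
theorem statement18 {k A : Type*} [Field k] [CommRing A] [IsDomain A] [Algebra k A]
    (p : ℕ) (hp : p.Prime) [CharP k p] [CharP A p]
    (φ : A →ₐ[k] A[X]) (hφ : IsExpMap φ)
    (n m : ℕ) (hn : 2 ≤ n) (hm : 2 ≤ m)
    (hnp : ¬ ∃ j : ℕ, n = p ^ j) (hmp : ¬ ∃ j : ℕ, m = p ^ j)
    (c₁ c₂ : A) (hc₁ : c₁ ∈ expInv φ) (hc₁0 : c₁ ≠ 0)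
    (hc₂ : c₂ ∈ expInv φ) (hc₂0 : c₂ ≠ 0)
    (a b : A) (hab : c₁ * a ^ n + c₂ * b ^ m ∈ expInv φ)
    (hab0 : c₁ * a ^ n + c₂ * b ^ m ≠ 0) :
    a ∈ expInv φ ∧ b ∈ expInv φ := by
  obtain ⟨hev, -⟩ := hφ
  rw [mem_expInv] at hc₁ hc₂ hab
  -- the key polynomial identity over A
  have key : C c₁ * (φ a) ^ n + C c₂ * (φ b) ^ m = C (c₁ * a ^ n + c₂ * b ^ m) := by
    rw [← hc₁, ← hc₂, ← map_pow, ← map_pow, ← map_mul, ← map_mul, ← map_add, hab]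
  -- move to the fraction field
  set K := FractionRing A
  have hi : Function.Injective (algebraMap A K) := IsFractionRing.injective A K
  haveI : CharP K p := charP_of_injective_algebraMap hi p
  set i : A →+* K := (algebraMap A K : A →+* K) with hi_def
  have key2 : C (i c₁) * ((φ a).map i) ^ n + C (i c₂) * ((φ b).map i) ^ m
      = C (i (c₁ * a ^ n + c₂ * b ^ m)) := by
    have h := congrArg (Polynomial.map i) key
    simpa [Polynomial.map_add, Polynomial.map_mul, Polynomial.map_pow, Polynomial.map_C]
      using h
  have hne : ∀ x : A, x ≠ 0 → i x ≠ 0 := fun x hx h =>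
    hx (hi (h.trans (map_zero i).symm))
  obtain ⟨z1, z2⟩ := myMain p hp hn hm hnp hmp
    (hne c₁ hc₁0) (hne c₂ hc₂0) (hne _ hab0) key2
  rw [natDegree_map_eq_of_injective hi] at z1 z2
  constructor
  · rw [mem_expInv]
    have h0 : φ a = C ((φ a).coeff 0) := (eq_C_of_natDegree_eq_zero z1)
    rwa [coeff_zero_eq_eval_zero, hev a] at h0
  · rw [mem_expInv]
    have h0 : φ b = C ((φ b).coeff 0) := (eq_C_of_natDegree_eq_zero z2)
    rwa [coeff_zero_eq_eval_zero, hev b] at h0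
end
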